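/- Let R > 0 and let x, y lie in the closed ball B_R(0) with x ≠ y. Set T = ‖y − x‖ and let φ be the unit-speed straight-line path φ_t = x + t·(y − x)/‖y − x‖ for t ∈ [0, T]. Then for every s ≥ 0 one has the energy estimate I^s_{0T}(φ) ≤ (T/2)·(1 + κ_R(0) + R·K_R(0) + ‖b(0,0)‖)². Consequently sup_{s ≥ 0} V^s(x, y) ≤ Γ·‖x − y‖ with Γ = (1/2)(1 + κ_R(0) + R·K_R(0) + ‖b(0,0)‖)². -/

import Mathlib

/-!
The straight line from `x` to `y` has unit speed and stays in the convex ball `B_R(0)`.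
On that ball the drift is bounded uniformly in time: periodicity reduces any time to `[0, 1)`,
where the time- and space-Lipschitz bounds compare `b(s, z)` with `b(0, 0)`. Hence the
integrand of the rate function is at most `(1/2)(1 + κ + R K + ‖b(0,0)‖)²`, and the path is
admissible for the quasi-potential at time `‖y - x‖`.
-/

open MeasureTheory Set Filter Topology
open scoped RealInnerProductSpace ENNReal

/-- The frozen rate function `I^s_{0T}` on paths `[0,T] → ℝ^d`:
`(1/2)∫₀^T ‖φ̇_t − b(s,φ_t)‖² dt` if `φ` is absolutely continuous with `L²` derivative,
and `+∞` otherwise. -/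
noncomputable def frozenRate {d : ℕ}
    (b : ℝ → EuclideanSpace ℝ (Fin d) → EuclideanSpace ℝ (Fin d))
    (s T : ℝ) (φ : ℝ → EuclideanSpace ℝ (Fin d)) : ℝ≥0∞ :=
  ⨅ g ∈ {g : ℝ → EuclideanSpace ℝ (Fin d) |
      MemLp g 2 (volume.restrict (Ioc (0:ℝ) T)) ∧
      ∀ t ∈ Icc (0:ℝ) T, φ t = φ 0 + ∫ u in (0:ℝ)..t, g u},
    ∫⁻ t in Ioc (0:ℝ) T, ENNReal.ofReal ((1/2) * ‖g t - b s (φ t)‖^2)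

/-- The cost function `V^s(x,y,t)`. -/
noncomputable def costFn {d : ℕ}
    (b : ℝ → EuclideanSpace ℝ (Fin d) → EuclideanSpace ℝ (Fin d))
    (s : ℝ) (x y : EuclideanSpace ℝ (Fin d)) (t : ℝ) : ℝ≥0∞ :=
  ⨅ φ ∈ {φ : ℝ → EuclideanSpace ℝ (Fin d) |
      ContinuousOn φ (Icc (0:ℝ) t) ∧ φ 0 = x ∧ φ t = y},
    frozenRate b s t φ

/-- The quasi-potential `V^s(x,y) = inf_{t>0} V^s(x,y,t)`. -/
noncomputable def quasipotential {d : ℕ}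
    (b : ℝ → EuclideanSpace ℝ (Fin d) → EuclideanSpace ℝ (Fin d))
    (s : ℝ) (x y : EuclideanSpace ℝ (Fin d)) : ℝ≥0∞ :=
  ⨅ t ∈ Ioi (0:ℝ), costFn b s x y t

theorem apply_eq_apply_fract_of_add_one {α : Type*} {f : ℝ → α}
    (hf : ∀ t ≥ (0:ℝ), f (t + 1) = f t) {s : ℝ} (hs : 0 ≤ s) : f s = f (Int.fract s) := by
  have hnat : ∀ n : ℕ, f (Int.fract s + n) = f (Int.fract s) := by
    intro n
    induction n with
    | zero => simp
    | succ n ih =>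
      rw [Nat.cast_succ, ← add_assoc, hf _ (by positivity), ih]
  rw [← hnat ⌊s⌋₊, natCast_floor_eq_intCast_floor hs, Int.fract_add_floor]

section DriftBound

variable {E F : Type*} [NormedAddCommGroup E] [NormedAddCommGroup F] {b : ℝ → E → F}
  {R K κ : ℝ}

theorem norm_apply_le_of_periodic_of_lipschitz
    (hper : ∀ t ≥ (0:ℝ), ∀ x, b (t + 1) x = b t x) (hK : 0 ≤ K) (hκ : 0 ≤ κ)
    (hLipX : ∀ t ≥ (0:ℝ), ∀ y₁ ∈ Metric.closedBall (0 : E) R,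
      ∀ y₂ ∈ Metric.closedBall (0 : E) R, ‖b t y₁ - b t y₂‖ ≤ K * ‖y₁ - y₂‖)
    (hLipT : ∀ s ≥ (0:ℝ), ∀ t ≥ (0:ℝ), ∀ y ∈ Metric.closedBall (0 : E) R,
      ‖b t y - b s y‖ ≤ κ * |t - s|)
    {s : ℝ} (hs : 0 ≤ s) {z : E} (hz : z ∈ Metric.closedBall 0 R) :
    ‖b s z‖ ≤ κ + R * K + ‖b 0 0‖ := by
  have hzR : ‖z‖ ≤ R := mem_closedBall_zero_iff.mp hz
  have h0 : (0 : E) ∈ Metric.closedBall 0 R :=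
    Metric.mem_closedBall_self ((norm_nonneg z).trans hzR)
  set r := Int.fract s
  have hr : 0 ≤ r := Int.fract_nonneg s
  have hbs : b s = b r := apply_eq_apply_fract_of_add_one (fun t ht => funext (hper t ht)) hs
  calc ‖b s z‖ = ‖(b r z - b r 0) + (b r 0 - b 0 0) + b 0 0‖ := by rw [hbs]; abel_nf
    _ ≤ ‖b r z - b r 0‖ + ‖b r 0 - b 0 0‖ + ‖b 0 0‖ := norm_add₃_le
    _ ≤ K * ‖z - 0‖ + κ * |r - 0| + ‖b 0 0‖ := by
      gcongr
      exacts [hLipX r hr z hz 0 h0, hLipT 0 le_rfl r hr 0 h0]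
    _ ≤ K * R + κ * 1 + ‖b 0 0‖ := by
      rw [sub_zero, sub_zero, abs_of_nonneg hr]
      gcongr
      exact (Int.fract_lt_one s).le
    _ = κ + R * K + ‖b 0 0‖ := by ring

end DriftBound

section RateFunction

variable {d : ℕ} {b : ℝ → EuclideanSpace ℝ (Fin d) → EuclideanSpace ℝ (Fin d)} {s T C : ℝ}
  {φ g : ℝ → EuclideanSpace ℝ (Fin d)}

theorem frozenRate_le_of_norm_sub_le
    (hg : MemLp g 2 (volume.restrict (Ioc (0:ℝ) T)))
    (hφ : ∀ t ∈ Icc (0:ℝ) T, φ t = φ 0 + ∫ u in (0:ℝ)..t, g u)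
    (hC : ∀ t ∈ Ioc (0:ℝ) T, ‖g t - b s (φ t)‖ ≤ C) :
    frozenRate b s T φ ≤ ENNReal.ofReal (T / 2 * C ^ 2) := by
  have hpointwise : ∀ t ∈ Ioc (0:ℝ) T,
      ENNReal.ofReal ((1/2) * ‖g t - b s (φ t)‖ ^ 2) ≤ ENNReal.ofReal ((1/2) * C ^ 2) := by
    intro t ht
    gcongr
    exact hC t ht
  calc frozenRate b s T φ
      ≤ ∫⁻ t in Ioc (0:ℝ) T, ENNReal.ofReal ((1/2) * ‖g t - b s (φ t)‖ ^ 2) :=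
        iInf₂_le g ⟨hg, hφ⟩
    _ ≤ ∫⁻ _ in Ioc (0:ℝ) T, ENNReal.ofReal ((1/2) * C ^ 2) :=
        setLIntegral_mono measurable_const hpointwise
    _ = ENNReal.ofReal ((1/2) * C ^ 2) * ENNReal.ofReal T := by
        rw [setLIntegral_const, Real.volume_Ioc, sub_zero]
    _ = ENNReal.ofReal (T / 2 * C ^ 2) := by
        rw [← ENNReal.ofReal_mul (by positivity)]
        ring_nf

theorem quasipotential_le_frozenRate {x y : EuclideanSpace ℝ (Fin d)} (hT : 0 < T)
    (hφc : ContinuousOn φ (Icc (0:ℝ) T)) (hφ0 : φ 0 = x) (hφT : φ T = y) :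
    quasipotential b s x y ≤ frozenRate b s T φ :=
  calc quasipotential b s x y ≤ costFn b s x y T := iInf₂_le T hT
    _ ≤ frozenRate b s T φ := iInf₂_le φ ⟨hφc, hφ0, hφT⟩

end RateFunction

theorem add_div_smul_eq_add_integral {E : Type*} [NormedAddCommGroup E] [NormedSpace ℝ E]
    [CompleteSpace E] (x v : E) (T t : ℝ) :
    x + (t / T) • v = (x + ((0:ℝ) / T) • v) + ∫ _ in (0:ℝ)..t, T⁻¹ • v := by
  rw [intervalIntegral.integral_const, smul_smul, zero_div, zero_smul, add_zero, sub_zero,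
    div_eq_mul_inv]

theorem frozenRate_segment_le {d : ℕ}
    {b : ℝ → EuclideanSpace ℝ (Fin d) → EuclideanSpace ℝ (Fin d)} {s M : ℝ}
    {S : Set (EuclideanSpace ℝ (Fin d))} (hS : Convex ℝ S) (hM : ∀ z ∈ S, ‖b s z‖ ≤ M)
    {x y : EuclideanSpace ℝ (Fin d)} (hx : x ∈ S) (hy : y ∈ S) (hxy : x ≠ y) :
    frozenRate b s ‖y - x‖ (fun t => x + (t / ‖y - x‖) • (y - x)) ≤
      ENNReal.ofReal (‖y - x‖ / 2 * (1 + M) ^ 2) := by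
  set T := ‖y - x‖
  have hT : 0 < T := norm_pos_iff.mpr (sub_ne_zero.mpr hxy.symm)
  have hspeed : ‖T⁻¹ • (y - x)‖ = 1 := by
    rw [norm_smul, norm_inv, norm_norm, inv_mul_cancel₀ hT.ne']
  have : IsFiniteMeasure (volume.restrict (Ioc (0:ℝ) T)) :=
    isFiniteMeasure_restrict.mpr measure_Ioc_lt_top.ne
  refine frozenRate_le_of_norm_sub_le (memLp_const (T⁻¹ • (y - x)))
    (fun t _ => add_div_smul_eq_add_integral x (y - x) T t) fun t ht => ?_
  have hmem : x + (t / T) • (y - x) ∈ S :=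
    hS.add_smul_sub_mem hx hy ⟨div_nonneg ht.1.le hT.le, div_le_one_of_le₀ ht.2 hT.le⟩
  calc ‖T⁻¹ • (y - x) - b s (x + (t / T) • (y - x))‖
      ≤ ‖T⁻¹ • (y - x)‖ + ‖b s (x + (t / T) • (y - x))‖ := norm_sub_le _ _
    _ ≤ 1 + M := by rw [hspeed]; gcongr; exact hM _ hmem

theorem straight_line_energy_bound_general {d : ℕ}
    (b : ℝ → EuclideanSpace ℝ (Fin d) → EuclideanSpace ℝ (Fin d))
    (hper : ∀ t ≥ (0:ℝ), ∀ x, b (t + 1) x = b t x)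
    (R : ℝ) (K κ : ℝ) (hK : 0 ≤ K) (hκ : 0 ≤ κ)
    (hLipX : ∀ t ≥ (0:ℝ), ∀ y₁ ∈ Metric.closedBall (0 : EuclideanSpace ℝ (Fin d)) R,
      ∀ y₂ ∈ Metric.closedBall (0 : EuclideanSpace ℝ (Fin d)) R,
        ‖b t y₁ - b t y₂‖ ≤ K * ‖y₁ - y₂‖)
    (hLipT : ∀ s ≥ (0:ℝ), ∀ t ≥ (0:ℝ), ∀ y ∈ Metric.closedBall (0 : EuclideanSpace ℝ (Fin d)) R,
        ‖b t y - b s y‖ ≤ κ * |t - s|)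
    (x y : EuclideanSpace ℝ (Fin d))
    (hx : x ∈ Metric.closedBall (0 : EuclideanSpace ℝ (Fin d)) R)
    (hy : y ∈ Metric.closedBall (0 : EuclideanSpace ℝ (Fin d)) R)
    (hxy : x ≠ y) :
    (∀ s ≥ (0:ℝ),
      frozenRate b s (‖y - x‖) (fun t => x + (t / ‖y - x‖) • (y - x)) ≤
        ENNReal.ofReal ((‖y - x‖ / 2) * (1 + κ + R * K + ‖b 0 0‖)^2)) ∧
    (∀ s ≥ (0:ℝ),
      quasipotential b s x y ≤
        ENNReal.ofReal ((1/2) * (1 + κ + R * K + ‖b 0 0‖)^2 * ‖x - y‖)) := by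
  have henergy : ∀ s ≥ (0:ℝ),
      frozenRate b s ‖y - x‖ (fun t => x + (t / ‖y - x‖) • (y - x)) ≤
        ENNReal.ofReal (‖y - x‖ / 2 * (1 + κ + R * K + ‖b 0 0‖) ^ 2) := by
    intro s hs
    simpa only [add_assoc] using frozenRate_segment_le (convex_closedBall 0 R)
      (fun z hz => norm_apply_le_of_periodic_of_lipschitz hper hK hκ hLipX hLipT hs hz) hx hy hxy
  have hT : 0 < ‖y - x‖ := norm_pos_iff.mpr (sub_ne_zero.mpr hxy.symm)
  refine ⟨henergy, fun s hs => ?_⟩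
  calc quasipotential b s x y
      ≤ frozenRate b s ‖y - x‖ (fun t => x + (t / ‖y - x‖) • (y - x)) :=
        quasipotential_le_frozenRate hT (by fun_prop) (by simp)
          (by rw [div_self hT.ne', one_smul, add_sub_cancel])
    _ ≤ _ := henergy s hs
    _ = _ := by rw [norm_sub_rev x y]; ring_nf

/-- energy estimate along the unit-speed straight-line path joining
`x` to `y` in the ball `B_R(0)`, and the resulting bound on the quasi-potential. -/
theorem straight_line_energy_bound {d : ℕ} (hd : 1 ≤ d)
    (b : ℝ → EuclideanSpace ℝ (Fin d) → EuclideanSpace ℝ (Fin d))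
    (hper : ∀ t ≥ (0:ℝ), ∀ x, b (t + 1) x = b t x)
    (R : ℝ) (hR : 0 < R) (K κ : ℝ) (hK : 0 ≤ K) (hκ : 0 ≤ κ)
    (hLipX : ∀ t ≥ (0:ℝ), ∀ y₁ ∈ Metric.closedBall (0 : EuclideanSpace ℝ (Fin d)) R,
      ∀ y₂ ∈ Metric.closedBall (0 : EuclideanSpace ℝ (Fin d)) R,
        ‖b t y₁ - b t y₂‖ ≤ K * ‖y₁ - y₂‖)
    (hLipT : ∀ s ≥ (0:ℝ), ∀ t ≥ (0:ℝ), ∀ y ∈ Metric.closedBall (0 : EuclideanSpace ℝ (Fin d)) R,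
        ‖b t y - b s y‖ ≤ κ * |t - s|)
    (x y : EuclideanSpace ℝ (Fin d))
    (hx : x ∈ Metric.closedBall (0 : EuclideanSpace ℝ (Fin d)) R)
    (hy : y ∈ Metric.closedBall (0 : EuclideanSpace ℝ (Fin d)) R)
    (hxy : x ≠ y) :
    (∀ s ≥ (0:ℝ),
      frozenRate b s (‖y - x‖) (fun t => x + (t / ‖y - x‖) • (y - x)) ≤
        ENNReal.ofReal ((‖y - x‖ / 2) * (1 + κ + R * K + ‖b 0 0‖)^2)) ∧
    (∀ s ≥ (0:ℝ),
      quasipotential b s x y ≤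
        ENNReal.ofReal ((1/2) * (1 + κ + R * K + ‖b 0 0‖)^2 * ‖x - y‖)) :=
  straight_line_energy_bound_general b hper R K κ hK hκ hLipX hLipT x y hx hy hxy
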